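/- arXiv:2508.05822 — 2 statements merged into one kernel-verified Lean document; each statement's English description precedes it below -/
import Mathlib

section
/- Let G = (V, E) be a finite directed graph with no self-loops. The Graver basis 𝔊_{A'_TV} of the matrix A'_TV equals 𝔊₁ ∪ 𝔊₂, where 𝔊₁ = {±(0, e_f, e_f) : f ∈ E} (e_f the standard basis vector of ℤ^E at edge f), and 𝔊₂ consists of all vectors ±z_{S,E⁺,E⁻} where S ⊆ V induces a connected subgraph, δ⁺(S) ∪ δ⁻(S) = E⁺ ∪ E⁻ is a partition of the crossing edges into disjoint sets E⁺ and E⁻, and z_{S,E⁺,E⁻} = (χ_S, a⁺, a⁻) is defined by: for f ∈ δ⁺(S), a⁺_f = 1, a⁻_f = 0 if f ∈ E⁺ and a⁺_f = 0, a⁻_f = −1 if f ∈ E⁻; for f ∈ δ⁻(S), a⁺_f = −1, a⁻_f = 0 if f ∈ E⁺ and a⁺_f = 0, a⁻_f = 1 if f ∈ E⁻; and a⁺_f = a⁻_f = 0 for all other edges f. -/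
open scoped Classical

/-- The undirected support graph of the directed edge set `E`. -/
def undirGraph {V : Type*} (E : Finset (V × V)) : SimpleGraph V where
  Adj u v := u ≠ v ∧ ((u, v) ∈ E ∨ (v, u) ∈ E)
  symm := by
    constructor
    intro u v h
    exact ⟨h.1.symm, h.2.elim Or.inr Or.inl⟩
  loopless := by constructor; intro u h; exact h.1 rfl

/-- `S ⊆ V` induces a connected subgraph of the (undirected version of the) graph. -/
def InducesConnected {V : Type*} (E : Finset (V × V)) (S : Set V) : Prop :=
  S.Nonempty ∧ ((undirGraph E).induce S).Connected

/-- Integer indicator vector of a set of vertices. -/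
noncomputable def chiV {V : Type*} (S : Set V) : V → ℤ :=
  S.indicator 1

/-- Integer indicator vector of a set of edges. -/
noncomputable def chiE {V : Type*} {E : Finset (V × V)}
    (T : Set {e : V × V // e ∈ E}) : {e : V × V // e ∈ E} → ℤ :=
  T.indicator 1

/-- Outgoing edges of `S`. -/
def deltaPlus {V : Type*} (E : Finset (V × V)) (S : Set V) :
    Set {e : V × V // e ∈ E} :=
  {e | (e : V × V).1 ∈ S ∧ (e : V × V).2 ∉ S}

/-- Incoming edges of `S`. -/
def deltaMinus {V : Type*} (E : Finset (V × V)) (S : Set V) :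
    Set {e : V × V // e ∈ E} :=
  {e | (e : V × V).1 ∉ S ∧ (e : V × V).2 ∈ S}

/-- The conformal (sign-compatible, coordinatewise) partial order `x ⊑ y`. -/
def Sqle {ι : Type*} (x y : ι → ℤ) : Prop :=
  ∀ i, 0 ≤ x i * y i ∧ |x i| ≤ |y i|

/-- `(x, a)` lies in the integer kernel of `A_TV`. -/
def InKerATV {V : Type*} (E : Finset (V × V)) (x : V → ℤ)
    (a : {e : V × V // e ∈ E} → ℤ) : Prop :=
  ∀ e : {e : V × V // e ∈ E}, x (e : V × V).1 - x (e : V × V).2 = a e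

/-- `(x, a)` is a Graver basis element of `A_TV`: a `⊑`-minimal nonzero
element of the integer kernel. -/
def InGraverATV {V : Type*} (E : Finset (V × V)) (x : V → ℤ)
    (a : {e : V × V // e ∈ E} → ℤ) : Prop :=
  InKerATV E x a ∧ ¬(x = 0 ∧ a = 0) ∧
    ∀ (x' : V → ℤ) (a' : {e : V × V // e ∈ E} → ℤ),
      InKerATV E x' a' → ¬(x' = 0 ∧ a' = 0) → Sqle x' x → Sqle a' a →
        x' = x ∧ a' = a

/-- `(x, a⁺, a⁻)` lies in the integer kernel of `A'_TV`. -/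
def InKerATV' {V : Type*} (E : Finset (V × V)) (x : V → ℤ)
    (ap am : {e : V × V // e ∈ E} → ℤ) : Prop :=
  ∀ e : {e : V × V // e ∈ E}, x (e : V × V).1 - x (e : V × V).2 = ap e - am e

/-- `(x, a⁺, a⁻)` is a Graver basis element of `A'_TV`: a `⊑`-minimal nonzero
element of the integer kernel. -/
def InGraverATV' {V : Type*} (E : Finset (V × V)) (x : V → ℤ)
    (ap am : {e : V × V // e ∈ E} → ℤ) : Prop :=
  InKerATV' E x ap am ∧ ¬(x = 0 ∧ ap = 0 ∧ am = 0) ∧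
    ∀ (x' : V → ℤ) (ap' am' : {e : V × V // e ∈ E} → ℤ),
      InKerATV' E x' ap' am' → ¬(x' = 0 ∧ ap' = 0 ∧ am' = 0) →
        Sqle x' x → Sqle ap' ap → Sqle am' am →
          x' = x ∧ ap' = ap ∧ am' = am

/-- The `a⁺`-part of the Graver move `z_{S,E⁺,E⁻}`. -/
noncomputable def zPlus {V : Type*} (E : Finset (V × V)) (S : Set V)
    (Ep : Set {e : V × V // e ∈ E}) : {e : V × V // e ∈ E} → ℤ :=
  fun f =>
    if f ∈ deltaPlus E S then (if f ∈ Ep then 1 else 0)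
    else if f ∈ deltaMinus E S then (if f ∈ Ep then -1 else 0)
    else 0

/-- The `a⁻`-part of the Graver move `z_{S,E⁺,E⁻}`. -/
noncomputable def zMinus {V : Type*} (E : Finset (V × V)) (S : Set V)
    (Em : Set {e : V × V // e ∈ E}) : {e : V × V // e ∈ E} → ℤ :=
  fun f =>
    if f ∈ deltaPlus E S then (if f ∈ Em then -1 else 0)
    else if f ∈ deltaMinus E S then (if f ∈ Em then 1 else 0)
    else 0

/-! Below `z_{S,E⁺,E⁻}`, a conformal kernel element `(x', a'⁺, a'⁻)` has `x'` with values in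
`{0, 1}` on `S`, zero off `S`, and constant along the edges inside `S` (where `a⁺ = a⁻ = 0`);
by connectivity `x' = c • χ_S`, and as `a⁺` and `a⁻` have disjoint supports the kernel
equation forces `(a'⁺, a'⁻) = c • (a⁺, a⁻)`. So the moves are Graver; `(0, e_f, e_f)` is similar.

Conversely, normalize the sign of a Graver element `g = (x, a⁺, a⁻)`. If `x = 0` then `a⁺ = a⁻`
and `(0, e_f, e_f) ⊑ g` for any `f` with `a⁺_f > 0`. Otherwise let `S` be the connected component
of a vertex `v` with `x_v > 0` in `{x > 0}`: `x` strictly drops along every edge leaving `S` and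
rises along every edge entering it, so `a⁺ - a⁻` has the sign of the crossing, and taking for
`E⁺` the crossing edges on which `a⁺` carries that sign gives `z_{S,E⁺,E⁻} ⊑ g`. In both cases
minimality of `g` turns `⊑` into equality. -/

namespace Sqle

variable {ι : Type*} {x y : ι → ℤ}

lemma eq_zero (h : Sqle y x) {i : ι} (hx : x i = 0) : y i = 0 := by
  simpa [hx] using (h i).2

lemma eq_zero_or_eq (h : Sqle y x) {i : ι} (hx : |x i| ≤ 1) : y i = 0 ∨ y i = x i := by
  obtain ⟨hmul, habs⟩ := h i
  have hy := habs.trans hx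
  rw [abs_le] at hx hy
  obtain hxi | hxi | hxi : x i = -1 ∨ x i = 0 ∨ x i = 1 := by omega
  all_goals rw [hxi] at hmul habs ⊢; simp only [abs_neg, abs_one, abs_zero] at habs
  all_goals rcases abs_cases (y i) with ⟨_, _⟩ | ⟨_, _⟩ <;> omega

protected lemma neg (h : Sqle y x) : Sqle (-y) (-x) := fun i => by
  simpa using h i

end Sqle

lemma sqle_of_eq_zero_or_eq_sign {ι : Type*} {x y : ι → ℤ}
    (h : ∀ i, y i = 0 ∨ y i = (x i).sign) : Sqle y x := by
  intro i
  rcases h i with hy | hy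
  · simp [hy]
  · rw [hy, Int.sign_mul_self_eq_abs]
    refine ⟨abs_nonneg _, ?_⟩
    rcases eq_or_ne (x i) 0 with hx | hx
    · simp [hx]
    · rw [Int.abs_sign_of_ne_zero hx]
      exact Int.one_le_abs hx

lemma eq_smul_of_sqle_of_sub_eq {ι : Type*} {ap am ap' am' : ι → ℤ} (c : ℤ)
    (hdisj : ∀ i, ap i = 0 ∨ am i = 0) (hp : Sqle ap' ap) (hm : Sqle am' am)
    (hsub : ∀ i, ap' i - am' i = c * (ap i - am i)) : ap' = c • ap ∧ am' = c • am := by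
  refine ⟨funext fun i => ?_, funext fun i => ?_⟩ <;>
  · have := hsub i
    rcases hdisj i with h | h
    · have := hp.eq_zero h
      simp_all
    · have := hm.eq_zero h
      simp_all

namespace SimpleGraph

variable {V : Type*} {G : SimpleGraph V}

lemma Preconnected.eq_of_forall_adj {α : Type*} (hG : G.Preconnected) {f : V → α}
    (hf : ∀ u v, G.Adj u v → f u = f v) (u v : V) : f u = f v := by
  simpa [Relation.reflTransGen_eq_self] using
    ((reachable_iff_reflTransGen u v).1 (hG u v)).lift f hf

lemma exists_connected_induce_closed {P : Set V} {v : V} (hv : v ∈ P) :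
    ∃ S ⊆ P, v ∈ S ∧ (G.induce S).Connected ∧ ∀ u ∈ S, ∀ w ∈ P, G.Adj u w → w ∈ S := by
  set C := (G.induce P).connectedComponentMk ⟨v, hv⟩
  refine ⟨Subtype.val '' C.supp, by simp, ⟨⟨v, hv⟩, rfl, rfl⟩, ?_, ?_⟩
  · let f : C.toSimpleGraph →g G.induce (Subtype.val '' C.supp) :=
      { toFun := fun u => ⟨u.1.1, u.1, u.2, rfl⟩, map_rel' := id }
    refine C.connected_toSimpleGraph.map f ?_
    rintro ⟨_, u, hu, rfl⟩
    exact ⟨⟨u, hu⟩, rfl⟩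
  · rintro _ ⟨u, hu, rfl⟩ w hw huw
    exact ⟨⟨w, hw⟩, C.mem_supp_of_adj_mem_supp hu (by simpa using huw), rfl⟩

end SimpleGraph

lemma eq_smul_of_smul_eq_of_eq_one_or_neg_one {M : Type*} [AddCommGroup M] {ε : ℤ}
    (hε : ε = 1 ∨ ε = -1) {y z : M} (h : ε • y = z) : y = ε • z := by
  rcases hε with rfl | rfl <;> simp [← h]

section Graver

variable {V : Type*} {E : Finset (V × V)} {x : V → ℤ} {ap am : {e : V × V // e ∈ E} → ℤ}

lemma InKerATV'.neg (h : InKerATV' E x ap am) : InKerATV' E (-x) (-ap) (-am) := fun e => by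
  simp only [Pi.neg_apply]
  linarith [h e]

lemma InGraverATV'.neg (h : InGraverATV' E x ap am) : InGraverATV' E (-x) (-ap) (-am) := by
  obtain ⟨hker, hnz, hmin⟩ := h
  refine ⟨hker.neg, by simpa using hnz, fun x' ap' am' hker' hnz' hx hap ham => ?_⟩
  have := hmin (-x') (-ap') (-am') hker'.neg (by simpa using hnz')
    (by simpa using hx.neg) (by simpa using hap.neg) (by simpa using ham.neg)
  simpa [neg_eq_iff_eq_neg] using this

lemma InGraverATV'.smul {ε : ℤ} (hε : ε = 1 ∨ ε = -1) (h : InGraverATV' E x ap am) :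
    InGraverATV' E (ε • x) (ε • ap) (ε • am) := by
  rcases hε with rfl | rfl
  · simpa using h
  · simpa using h.neg

lemma inGraverATV'_of_sqle_dichotomy (hker : InKerATV' E x ap am)
    (hnz : ¬(x = 0 ∧ ap = 0 ∧ am = 0))
    (h : ∀ (x' : V → ℤ) (ap' am' : {e : V × V // e ∈ E} → ℤ), InKerATV' E x' ap' am' →
      Sqle x' x → Sqle ap' ap → Sqle am' am →
        (x' = 0 ∧ ap' = 0 ∧ am' = 0) ∨ (x' = x ∧ ap' = ap ∧ am' = am)) :
    InGraverATV' E x ap am :=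
  ⟨hker, hnz, fun x' ap' am' hker' hnz' hx hap ham =>
    (h x' ap' am' hker' hx hap ham).resolve_left hnz'⟩

lemma inGraverATV'_single [DecidableEq V] (f : {e : V × V // e ∈ E}) :
    InGraverATV' E 0 (Pi.single f 1) (Pi.single f 1) := by
  refine inGraverATV'_of_sqle_dichotomy (fun e => by simp) (fun h => by
    simpa using congrFun h.2.1 f) fun x' ap' am' hker' hx hap ham => ?_
  have hx' : x' = 0 := funext fun u => hx.eq_zero rfl
  have ham' : am' = ap' := funext fun e => by
    simpa [hx', sub_eq_zero, eq_comm] using hker' e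
  have hoff : ∀ e ≠ f, ap' e = 0 := fun e he => hap.eq_zero (Pi.single_eq_of_ne he 1)
  have hap' : ap' = ap' f • Pi.single f 1 := by
    ext e
    by_cases he : e = f
    · simp [he]
    · simp [he, hoff e he]
  rcases hap.eq_zero_or_eq (i := f) (by simp) with h | h <;>
    · rw [h] at hap'
      simp_all

end Graver

section Cut

variable {V : Type*} {E : Finset (V × V)} {S : Set V} {Ep Em : Set {e : V × V // e ∈ E}}

lemma chiV_apply (S : Set V) (u : V) : chiV S u = if u ∈ S then 1 else 0 := by
  simp [chiV, Set.indicator_apply]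

lemma zPlus_eq_zero_or_zMinus_eq_zero (hI : Ep ∩ Em = ∅) (e : {e : V × V // e ∈ E}) :
    zPlus E S Ep e = 0 ∨ zMinus E S Em e = 0 := by
  have : e ∉ Ep ∨ e ∉ Em := by
    by_contra! h
    exact (Set.eq_empty_iff_forall_notMem.1 hI) e h
  rcases this with h | h <;> simp [zPlus, zMinus, h]

lemma zPlus_sub_zMinus (hU : Ep ∪ Em = deltaPlus E S ∪ deltaMinus E S) (hI : Ep ∩ Em = ∅)
    (e : {e : V × V // e ∈ E}) :
    zPlus E S Ep e - zMinus E S Em e = chiV S e.1.1 - chiV S e.1.2 := by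
  have hmem := Set.ext_iff.1 hU e
  have hdisj := Set.ext_iff.1 hI e
  simp only [Set.mem_union, Set.mem_inter_iff, Set.mem_empty_iff_false, iff_false,
    not_and] at hmem hdisj
  by_cases h1 : e.1.1 ∈ S <;> by_cases h2 : e.1.2 ∈ S <;> by_cases hp : e ∈ Ep <;>
    simp_all [zPlus, zMinus, chiV_apply, deltaPlus, deltaMinus]

lemma inKerATV'_cut (hU : Ep ∪ Em = deltaPlus E S ∪ deltaMinus E S) (hI : Ep ∩ Em = ∅) :
    InKerATV' E (chiV S) (zPlus E S Ep) (zMinus E S Em) :=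
  fun e => (zPlus_sub_zMinus hU hI e).symm

lemma inGraverATV'_cut (hS : InducesConnected E S)
    (hU : Ep ∪ Em = deltaPlus E S ∪ deltaMinus E S) (hI : Ep ∩ Em = ∅) :
    InGraverATV' E (chiV S) (zPlus E S Ep) (zMinus E S Em) := by
  obtain ⟨⟨v₀, hv₀⟩, hconn⟩ := hS
  refine inGraverATV'_of_sqle_dichotomy (inKerATV'_cut hU hI)
    (fun h => by simpa [chiV_apply, hv₀] using congrFun h.1 v₀)
    fun x' ap' am' hker' hx hap ham => ?_
  have hinner : ∀ e : {e : V × V // e ∈ E}, e.1.1 ∈ S → e.1.2 ∈ S → x' e.1.1 = x' e.1.2 := by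
    intro e h1 h2
    have hp : e ∉ deltaPlus E S := by simp [deltaPlus, h2]
    have hm : e ∉ deltaMinus E S := by simp [deltaMinus, h1]
    have := hker' e
    rw [hap.eq_zero (by simp [zPlus, hp, hm]), ham.eq_zero (by simp [zMinus, hp, hm])] at this
    linarith
  have hconst : ∀ u ∈ S, x' u = x' v₀ := fun u hu =>
    hconn.preconnected.eq_of_forall_adj (f := fun w : S => x' w) (fun a b hab => by
      rcases (SimpleGraph.comap_adj.1 hab).2 with h | h
      · exact hinner ⟨_, h⟩ a.2 b.2
      · exact (hinner ⟨_, h⟩ b.2 a.2).symm) ⟨u, hu⟩ ⟨v₀, hv₀⟩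
  set c := x' v₀
  have hx' : x' = c • chiV S := funext fun u => by
    by_cases hu : u ∈ S
    · simp [chiV_apply, hu, hconst u hu]
    · simp [chiV_apply, hu, hx.eq_zero (i := u) (by simp [chiV_apply, hu])]
  have hc : c = 0 ∨ c = 1 := by
    simpa [chiV_apply, hv₀] using hx.eq_zero_or_eq (i := v₀) (by simp [chiV_apply, hv₀])
  obtain ⟨hap', ham'⟩ := eq_smul_of_sqle_of_sub_eq c (zPlus_eq_zero_or_zMinus_eq_zero hI)
    hap ham fun e => by rw [← hker' e, zPlus_sub_zMinus hU hI, hx']; simp [mul_sub]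
  rcases hc with hc | hc <;> simp [hx', hap', ham', hc]

end Cut

section Positive

variable {V : Type*} {E : Finset (V × V)} {S : Set V} {ap am : {e : V × V // e ∈ E} → ℤ}

def cutPlusEdges (E : Finset (V × V)) (S : Set V) (ap : {e : V × V // e ∈ E} → ℤ) :
    Set {e : V × V // e ∈ E} :=
  {e | e ∈ deltaPlus E S ∧ 0 < ap e} ∪ {e | e ∈ deltaMinus E S ∧ ap e < 0}

lemma notMem_deltaMinus_of_mem_deltaPlus {e : {e : V × V // e ∈ E}}
    (h : e ∈ deltaPlus E S) : e ∉ deltaMinus E S :=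
  fun h' => h'.1 h.1

lemma sqle_zPlus_cutPlusEdges : Sqle (zPlus E S (cutPlusEdges E S ap)) ap := by
  refine sqle_of_eq_zero_or_eq_sign fun e => ?_
  by_cases h1 : e ∈ deltaPlus E S
  · have h2 := notMem_deltaMinus_of_mem_deltaPlus h1
    by_cases hp : 0 < ap e
    · simp [zPlus, cutPlusEdges, h1, hp, Int.sign_eq_one_of_pos hp]
    · simp [zPlus, cutPlusEdges, h1, h2, hp]
  · by_cases h2 : e ∈ deltaMinus E S
    · by_cases hn : ap e < 0
      · simp [zPlus, cutPlusEdges, h1, h2, hn, Int.sign_eq_neg_one_of_neg hn]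
      · simp [zPlus, cutPlusEdges, h1, h2, hn]
    · simp [zPlus, h1, h2]

lemma sqle_zMinus_diff_cutPlusEdges (hout : ∀ e ∈ deltaPlus E S, 0 < ap e - am e)
    (hin : ∀ e ∈ deltaMinus E S, ap e - am e < 0) :
    Sqle (zMinus E S ((deltaPlus E S ∪ deltaMinus E S) \ cutPlusEdges E S ap)) am := by
  refine sqle_of_eq_zero_or_eq_sign fun e => ?_
  by_cases h1 : e ∈ deltaPlus E S
  · have h2 := notMem_deltaMinus_of_mem_deltaPlus h1
    by_cases hp : 0 < ap e
    · simp [zMinus, cutPlusEdges, h1, hp]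
    · have hn : am e < 0 := by linarith [hout e h1]
      simp [zMinus, cutPlusEdges, h1, h2, hp, Int.sign_eq_neg_one_of_neg hn]
  · by_cases h2 : e ∈ deltaMinus E S
    · by_cases hn : ap e < 0
      · simp [zMinus, cutPlusEdges, h1, h2, hn]
      · have hp : 0 < am e := by linarith [hin e h2]
        simp [zMinus, cutPlusEdges, h1, h2, hn, Int.sign_eq_one_of_pos hp]
    · simp [zMinus, h1, h2]

end Positive

section Decomposition

variable {V : Type*} {E : Finset (V × V)} {x : V → ℤ} {ap am : {e : V × V // e ∈ E} → ℤ}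

lemma InGraverATV'.eq_single_of_pos [DecidableEq V] (hG : InGraverATV' E x ap am) (hx : x = 0)
    {f : {e : V × V // e ∈ E}} (hf : 0 < ap f) : ap = Pi.single f 1 ∧ am = Pi.single f 1 := by
  have ham : am = ap := funext fun e => by
    simpa [hx, sub_eq_zero, eq_comm] using hG.1 e
  have hsq : Sqle (Pi.single f 1) ap := sqle_of_eq_zero_or_eq_sign fun e => by
    by_cases he : e = f
    · simp [he, Int.sign_eq_one_of_pos hf]
    · simp [he]
  obtain ⟨-, hap, ham'⟩ := hG.2.2 0 _ _ (fun e => by simp)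
    (fun h => by simpa using congrFun h.2.1 f) (fun _ => by simp) hsq (ham ▸ hsq)
  exact ⟨hap.symm, ham'.symm⟩

lemma InGraverATV'.exists_cut_of_pos (hG : InGraverATV' E x ap am) {v : V} (hv : 0 < x v) :
    ∃ (S : Set V) (Ep Em : Set {e : V × V // e ∈ E}), InducesConnected E S ∧
      Ep ∪ Em = deltaPlus E S ∪ deltaMinus E S ∧ Ep ∩ Em = ∅ ∧
      x = chiV S ∧ ap = zPlus E S Ep ∧ am = zMinus E S Em := by
  obtain ⟨hker, -, hmin⟩ := hG
  obtain ⟨S, hSP, hvS, hconn, hclosed⟩ :=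
    (undirGraph E).exists_connected_induce_closed (P := {u | 0 < x u}) hv
  have hpos : ∀ u ∈ S, 0 < x u := fun u hu => hSP hu
  have hout : ∀ e ∈ deltaPlus E S, 0 < ap e - am e := by
    rintro e ⟨h1, h2⟩
    have : x e.1.2 ≤ 0 := by
      by_contra! h
      exact h2 (hclosed _ h1 _ h ⟨fun h' => h2 (h' ▸ h1), Or.inl e.2⟩)
    linarith [hker e, hpos _ h1]
  have hin : ∀ e ∈ deltaMinus E S, ap e - am e < 0 := by
    rintro e ⟨h1, h2⟩
    have : x e.1.1 ≤ 0 := by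
      by_contra! h
      exact h1 (hclosed _ h2 _ h ⟨fun h' => h1 (h' ▸ h2), Or.inr e.2⟩)
    linarith [hker e, hpos _ h2]
  set Ep := cutPlusEdges E S ap
  set Em := (deltaPlus E S ∪ deltaMinus E S) \ Ep
  have hU : Ep ∪ Em = deltaPlus E S ∪ deltaMinus E S := Set.union_sdiff_cancel <| by
    rintro e (h | h)
    exacts [Or.inl h.1, Or.inr h.1]
  have hI : Ep ∩ Em = ∅ := Set.inter_sdiff_self _ _
  have hx : Sqle (chiV S) x := sqle_of_eq_zero_or_eq_sign fun u => by
    by_cases hu : u ∈ S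
    · simp [chiV_apply, hu, Int.sign_eq_one_of_pos (hpos u hu)]
    · simp [chiV_apply, hu]
  obtain ⟨h1, h2, h3⟩ := hmin _ _ _ (inKerATV'_cut hU hI)
    (fun h => by simpa [chiV_apply, hvS] using congrFun h.1 v) hx sqle_zPlus_cutPlusEdges
    (sqle_zMinus_diff_cutPlusEdges hout hin)
  exact ⟨S, Ep, Em, ⟨⟨v, hvS⟩, hconn⟩, hU, hI, h1.symm, h2.symm, h3.symm⟩

lemma InKerATV'.exists_sign_pos (hker : InKerATV' E x ap am)
    (hnz : ¬(x = 0 ∧ ap = 0 ∧ am = 0)) :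
    ∃ ε : ℤ, (ε = 1 ∨ ε = -1) ∧ ((x = 0 ∧ ∃ f, 0 < ε * ap f) ∨ ∃ v, 0 < ε * x v) := by
  have hsign : ∀ a : ℤ, a ≠ 0 → ∃ ε : ℤ, (ε = 1 ∨ ε = -1) ∧ 0 < ε * a := fun a ha => by
    rcases ha.lt_or_gt with h | h
    exacts [⟨-1, Or.inr rfl, by linarith⟩, ⟨1, Or.inl rfl, by linarith⟩]
  by_cases hx : x = 0
  · have ham : am = ap := funext fun e => by
      simpa [hx, sub_eq_zero, eq_comm] using hker e
    obtain ⟨f, hf⟩ : ∃ f, ap f ≠ 0 := by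
      by_contra! h
      exact hnz ⟨hx, funext h, ham.trans (funext h)⟩
    obtain ⟨ε, hε, hpos⟩ := hsign _ hf
    exact ⟨ε, hε, Or.inl ⟨hx, f, hpos⟩⟩
  · obtain ⟨v, hv⟩ := Function.ne_iff.1 hx
    obtain ⟨ε, hε, hpos⟩ := hsign _ hv
    exact ⟨ε, hε, Or.inr ⟨v, hpos⟩⟩

end Decomposition

theorem graverBasis_ATV'_characterization_general
    {V : Type*} [DecidableEq V] (E : Finset (V × V))
    (x : V → ℤ) (ap am : {e : V × V // e ∈ E} → ℤ) :
    InGraverATV' E x ap am ↔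
      ((∃ (ε : ℤ) (f : {e : V × V // e ∈ E}), (ε = 1 ∨ ε = -1) ∧
          x = 0 ∧ ap = ε • Pi.single f 1 ∧ am = ε • Pi.single f 1) ∨
       (∃ (ε : ℤ) (S : Set V) (Ep Em : Set {e : V × V // e ∈ E}),
          (ε = 1 ∨ ε = -1) ∧ InducesConnected E S ∧
          Ep ∪ Em = deltaPlus E S ∪ deltaMinus E S ∧ Ep ∩ Em = ∅ ∧
          x = ε • chiV S ∧ ap = ε • zPlus E S Ep ∧ am = ε • zMinus E S Em)) := by
  constructor
  · intro hG
    obtain ⟨ε, hε, hpos⟩ := hG.1.exists_sign_pos hG.2.1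
    have hεG := hG.smul hε
    rcases hpos with ⟨hx, f, hf⟩ | ⟨v, hv⟩
    · obtain ⟨hap, ham⟩ := hεG.eq_single_of_pos (by simp [hx]) (f := f) hf
      exact Or.inl ⟨ε, f, hε, hx, eq_smul_of_smul_eq_of_eq_one_or_neg_one hε hap,
        eq_smul_of_smul_eq_of_eq_one_or_neg_one hε ham⟩
    · obtain ⟨S, Ep, Em, hS, hU, hI, hx, hap, ham⟩ := hεG.exists_cut_of_pos (v := v) hv
      exact Or.inr ⟨ε, S, Ep, Em, hε, hS, hU, hI,
        eq_smul_of_smul_eq_of_eq_one_or_neg_one hε hx,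
        eq_smul_of_smul_eq_of_eq_one_or_neg_one hε hap,
        eq_smul_of_smul_eq_of_eq_one_or_neg_one hε ham⟩
  · rintro (⟨ε, f, hε, rfl, rfl, rfl⟩ | ⟨ε, S, Ep, Em, hε, hS, hU, hI, rfl, rfl, rfl⟩)
    · simpa using (inGraverATV'_single f).smul hε
    · exact (inGraverATV'_cut hS hU hI).smul hε

/-- The Graver basis of `A'_TV` equals `𝔊₁ ∪ 𝔊₂`, where
`𝔊₁ = {±(0, e_f, e_f) : f ∈ E}` and `𝔊₂` consists of all `±z_{S,E⁺,E⁻}` for `S`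
inducing a connected subgraph and `E⁺ ∪ E⁻` a partition of `δ(S)`. -/
theorem graverBasis_ATV'_characterization
    {V : Type*} [Fintype V] [DecidableEq V] (E : Finset (V × V))
    (hloop : ∀ e ∈ E, e.1 ≠ e.2)
    (x : V → ℤ) (ap am : {e : V × V // e ∈ E} → ℤ) :
    InGraverATV' E x ap am ↔
      ((∃ (ε : ℤ) (f : {e : V × V // e ∈ E}), (ε = 1 ∨ ε = -1) ∧
          x = 0 ∧ ap = ε • Pi.single f 1 ∧ am = ε • Pi.single f 1) ∨
       (∃ (ε : ℤ) (S : Set V) (Ep Em : Set {e : V × V // e ∈ E}),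
          (ε = 1 ∨ ε = -1) ∧ InducesConnected E S ∧
          Ep ∪ Em = deltaPlus E S ∪ deltaMinus E S ∧ Ep ∩ Em = ∅ ∧
          x = ε • chiV S ∧ ap = ε • zPlus E S Ep ∧ am = ε • zMinus E S Em)) :=
  graverBasis_ATV'_characterization_general E x ap am
end

section
/- Let G = (V, E) be a finite directed graph with no self-loops, Q ∈ ℕ, Δ ∈ ℝ, and let F_v, G_{uv}, H_v : ℝ → ℝ be convex functions, with J(x) = Σ_{v∈V} F_v(x_v) + Σ_{(u,v)∈E} G_{uv}(x_u − x_v) and H(x) = Σ_{v∈V} H_v(x_v) for x ∈ ℤ^V. Call x ∈ ℤ^V feasible if 0 ≤ x_v ≤ Q for all v and H(x) ≤ Δ. Suppose x is feasible and 𝔊_{A_TV}-optimal, i.e., for every g = (g_x, g_a) in the Graver basis 𝔊_{A_TV} such that x + g_x is feasible, J(x + g_x) ≥ J(x). Then x is 1-optimal: J(x) ≤ J(x') for every feasible x' with Σ_{v∈V} |x_v − x'_v| ≤ 1. -/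
open scoped Classical

/-- The objective `J(x) = Σ_v F_v(x_v) + Σ_{(u,v)∈E} G_{uv}(x_u − x_v)`. -/
noncomputable def JObj {V : Type*} [Fintype V] (E : Finset (V × V))
    (F : V → ℝ → ℝ) (Gf : V × V → ℝ → ℝ) (x : V → ℤ) : ℝ :=
  (∑ v, F v (x v : ℝ)) + ∑ e ∈ E, Gf e ((x e.1 : ℝ) - (x e.2 : ℝ))

/-- The budget `H(x) = Σ_v H_v(x_v)`. -/
noncomputable def HObj {V : Type*} [Fintype V] (Hf : V → ℝ → ℝ) (x : V → ℤ) : ℝ :=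
  ∑ v, Hf v (x v : ℝ)

/-!
A feasible point at `ℓ¹`-distance one from `x` is `x ± e_v`. Since a kernel element of `A_TV`
is determined by its vertex part, `±e_v` together with its edge differences is a Graver element:
any nonzero kernel element conformal to it has vertex part `±e_v` again.
-/

theorem eq_zero_of_ne_of_sum_abs_le_one {ι : Type*} [Fintype ι] {d : ι → ℤ}
    (hd : ∑ k, |d k| ≤ 1) {i j : ι} (hi : d i ≠ 0) (hji : j ≠ i) : d j = 0 := by
  have hpair : |d j| + |d i| ≤ ∑ k, |d k| := by
    rw [← Finset.sum_pair (f := fun k => |d k|) hji]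
    exact Finset.sum_le_sum_of_subset_of_nonneg (Finset.subset_univ _)
      fun k _ _ => abs_nonneg _
  have := Int.one_le_abs hi
  exact abs_nonpos_iff.mp (by linarith)

theorem Sqle.eq_zero_or_eq_of_sum_abs_le_one {ι : Type*} [Fintype ι] {y d : ι → ℤ}
    (hyd : Sqle y d) (hd : ∑ k, |d k| ≤ 1) : y = 0 ∨ y = d := by
  refine or_iff_not_imp_left.mpr fun hy => ?_
  obtain ⟨i, hyi : y i ≠ 0⟩ := Function.ne_iff.mp hy
  have hdi : d i ≠ 0 := fun h => hyi (abs_nonpos_iff.mp (by simpa [h] using (hyd i).2))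
  funext j
  rcases eq_or_ne j i with rfl | hji
  · have hdj : |d j| = 1 := le_antisymm
      ((Finset.single_le_sum (fun k _ => abs_nonneg (d k)) (Finset.mem_univ j)).trans hd)
      (Int.one_le_abs hdi)
    have hyj : |y j| ≤ 1 := hdj ▸ (hyd j).2
    have hsign := (hyd j).1
    rcases abs_eq_abs.mp (hdj.trans abs_one.symm) with h | h <;> rw [h] at hsign ⊢ <;>
      have := abs_le.mp hyj <;> omega
  · have hdj := eq_zero_of_ne_of_sum_abs_le_one hd hdi hji
    simpa [hdj] using (hyd j).2

/-- The edge part of the unique kernel element of `A_TV` with vertex part `g`. -/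
def edgeDiff {V : Type*} (E : Finset (V × V)) (g : V → ℤ) : {e : V × V // e ∈ E} → ℤ :=
  fun e => g (e : V × V).1 - g (e : V × V).2

theorem InKerATV.eq_edgeDiff {V : Type*} {E : Finset (V × V)} {x : V → ℤ}
    {a : {e : V × V // e ∈ E} → ℤ} (h : InKerATV E x a) : a = edgeDiff E x :=
  funext fun e => (h e).symm

theorem inGraverATV_edgeDiff_of_minimal {V : Type*} (E : Finset (V × V)) {g : V → ℤ}
    (hg : g ≠ 0) (hmin : ∀ y : V → ℤ, y ≠ 0 → Sqle y g → y = g) :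
    InGraverATV E g (edgeDiff E g) := by
  refine ⟨fun _ => rfl, fun h => hg h.1, fun y a hker hne hyg _ => ?_⟩
  have hy : y ≠ 0 := by
    rintro rfl
    exact hne ⟨rfl, hker.eq_edgeDiff.trans (funext fun _ => sub_self 0)⟩
  have hyg := hmin y hy hyg
  exact ⟨hyg, hyg ▸ hker.eq_edgeDiff⟩

theorem graver_optimal_implies_one_optimal_general
    {V : Type*} [Fintype V] (E : Finset (V × V))
    (Q : ℕ) (Δ : ℝ)
    (F : V → ℝ → ℝ) (Gf : V × V → ℝ → ℝ) (Hf : V → ℝ → ℝ)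
    (x : V → ℤ)
    (hopt : ∀ (gx : V → ℤ) (ga : {e : V × V // e ∈ E} → ℤ),
      InGraverATV E gx ga →
      ((∀ v, 0 ≤ x v + gx v ∧ x v + gx v ≤ (Q : ℤ)) ∧ HObj Hf (x + gx) ≤ Δ) →
      JObj E F Gf x ≤ JObj E F Gf (x + gx)) :
    ∀ x' : V → ℤ,
      ((∀ v, 0 ≤ x' v ∧ x' v ≤ (Q : ℤ)) ∧ HObj Hf x' ≤ Δ) →
      (∑ v, |x v - x' v|) ≤ 1 →
      JObj E F Gf x ≤ JObj E F Gf x' := by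
  intro x' hfeas' hdist
  obtain ⟨g, rfl⟩ : ∃ g, x' = x + g := ⟨x' - x, (add_sub_cancel x x').symm⟩
  rcases eq_or_ne g 0 with rfl | hg0
  · rw [add_zero]
  have hnorm : ∑ v, |g v| ≤ 1 := by
    simpa only [Pi.add_apply, sub_add_cancel_left, abs_neg] using hdist
  have hgraver : InGraverATV E g (edgeDiff E g) :=
    inGraverATV_edgeDiff_of_minimal E hg0 fun y hy hyg =>
      (hyg.eq_zero_or_eq_of_sum_abs_le_one hnorm).resolve_left hy
  exact hopt g (edgeDiff E g) hgraver (by simpa only [Pi.add_apply] using hfeas')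

/-- A feasible `𝔊_{A_TV}`-optimal point is 1-optimal: it is at
least as good as every feasible point at `ℓ¹`-distance at most 1. -/
theorem graver_optimal_implies_one_optimal
    {V : Type*} [Fintype V] [DecidableEq V] (E : Finset (V × V))
    (hloop : ∀ e ∈ E, e.1 ≠ e.2) (Q : ℕ) (Δ : ℝ)
    (F : V → ℝ → ℝ) (Gf : V × V → ℝ → ℝ) (Hf : V → ℝ → ℝ)
    (hF : ∀ v, ConvexOn ℝ Set.univ (F v))
    (hG : ∀ e ∈ E, ConvexOn ℝ Set.univ (Gf e))
    (hH : ∀ v, ConvexOn ℝ Set.univ (Hf v))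
    (x : V → ℤ)
    (hfeas : (∀ v, 0 ≤ x v ∧ x v ≤ (Q : ℤ)) ∧ HObj Hf x ≤ Δ)
    (hopt : ∀ (gx : V → ℤ) (ga : {e : V × V // e ∈ E} → ℤ),
      InGraverATV E gx ga →
      ((∀ v, 0 ≤ x v + gx v ∧ x v + gx v ≤ (Q : ℤ)) ∧ HObj Hf (x + gx) ≤ Δ) →
      JObj E F Gf x ≤ JObj E F Gf (x + gx)) :
    ∀ x' : V → ℤ,
      ((∀ v, 0 ≤ x' v ∧ x' v ≤ (Q : ℤ)) ∧ HObj Hf x' ≤ Δ) →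
      (∑ v, |x v - x' v|) ≤ 1 →
      JObj E F Gf x ≤ JObj E F Gf x' :=
  graver_optimal_implies_one_optimal_general E Q Δ F Gf Hf x hopt
end
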